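/- arXiv:2108.12485 — 4 statements merged into one kernel-verified Lean document; each statement's English description precedes it below -/
import Mathlib

section
/- If Σ_{k=0}^{∞} 1/‖D_k‖ = ∞, then any two square-summable solutions of the eigenvalue equation have vanishing Wronskian: for every z ∈ ℂ and every pair of sequences u, v : ℤ_+ → ℂ^l satisfying D_{n−1}u_{n−1} + D_n u_{n+1} + V_n u_n = z u_n and D_{n−1}v_{n−1} + D_n v_{n+1} + V_n v_n = z v_n for all n ≥ 1, with Σ_{n≥0} ‖u_n‖² < ∞ and Σ_{n≥0} ‖v_n‖² < ∞, one has W_{[u,v]}(n) = 0 for every n ≥ 1. -/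
open Matrix Filter

noncomputable section

/-- The complexification of a real matrix. -/
def cmat {l : ℕ} (A : Matrix (Fin l) (Fin l) ℝ) : Matrix (Fin l) (Fin l) ℂ :=
  A.map (Complex.ofReal)

/-- The operator norm of a real `l×l` matrix, i.e. the norm of the induced continuous linear
map on Euclidean space. -/
def opNorm {l : ℕ} (A : Matrix (Fin l) (Fin l) ℝ) : ℝ :=
  ‖Matrix.toEuclideanCLM (𝕜 := ℝ) (n := Fin l) A‖

/-- The Wronskian of two `ℂ^l`-valued sequences (indexed by `ℤ₊ = ℕ`) at `n ≥ 1`: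
`W_{[u,v]}(n) = u_n^t D_{n-1} v_{n-1} − v_n^t D_{n-1} u_{n-1}` (transpose, no conjugation). -/
def wronskianN {l : ℕ} (D : ℕ → Matrix (Fin l) (Fin l) ℝ) (u v : ℕ → Fin l → ℂ) (n : ℕ) : ℂ :=
  u n ⬝ᵥ (cmat (D (n - 1)) *ᵥ v (n - 1)) - v n ⬝ᵥ (cmat (D (n - 1)) *ᵥ u (n - 1))

/-!
The recurrence and the symmetry of `D_n`, `V_n` make the Wronskian constant in `n ≥ 1`, say equal
to `W`. Bounding `|W| = |W(n + 1)|` entrywise gives `|W| ≤ ‖D_n‖ c_n`, where `c_n` collects the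
squared norms of `u` and `v` at `n` and `n + 1`. Hence `|W| Σ 1/‖D_n‖ ≤ Σ c_n < ∞`, which forces
`W = 0` once `Σ 1/‖D_n‖` diverges.
-/

lemma Matrix.IsSymm.dotProduct_mulVec_comm {R ι : Type*} [CommSemiring R] [Fintype ι]
    {B : Matrix ι ι R} (hB : B.IsSymm) (x y : ι → R) :
    x ⬝ᵥ (B *ᵥ y) = y ⬝ᵥ (B *ᵥ x) := by
  rw [dotProduct_mulVec, dotProduct_comm, ← vecMul_transpose, hB.eq]

lemma abs_apply_le_opNorm {l : ℕ} (A : Matrix (Fin l) (Fin l) ℝ) (i j : Fin l) :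
    |A i j| ≤ opNorm A := by
  set T := Matrix.toEuclideanCLM (𝕜 := ℝ) (n := Fin l) A
  have hentry : A i j = inner ℝ (EuclideanSpace.single i 1) (T (EuclideanSpace.single j 1)) := by
    simp [T, inner_toEuclideanCLM, mulVec_single]
  calc |A i j| ≤ ‖EuclideanSpace.single i (1 : ℝ)‖ * ‖T (EuclideanSpace.single j 1)‖ := by
        rw [hentry]; exact abs_real_inner_le_norm _ _
    _ ≤ 1 * (‖T‖ * ‖EuclideanSpace.single j (1 : ℝ)‖) := by
        rw [PiLp.norm_single, norm_one]
        exact mul_le_mul_of_nonneg_left (T.le_opNorm _) zero_le_one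
    _ = opNorm A := by simp [opNorm, T]

lemma sum_sum_mul_le {ι : Type*} [Fintype ι] (a b : ι → ℝ) :
    ∑ i, ∑ j, a i * b j ≤ Fintype.card ι / 2 * (∑ i, a i ^ 2 + ∑ j, b j ^ 2) := by
  calc ∑ i, ∑ j, a i * b j ≤ ∑ i, ∑ j, (a i ^ 2 + b j ^ 2) / 2 :=
        Finset.sum_le_sum fun i _ => Finset.sum_le_sum fun j _ => by
          nlinarith [sq_nonneg (a i - b j)]
    _ = Fintype.card ι / 2 * (∑ i, a i ^ 2 + ∑ j, b j ^ 2) := by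
        simp only [add_div, Finset.sum_add_distrib, Finset.sum_const, Finset.card_univ,
          nsmul_eq_mul, ← Finset.sum_div, ← Finset.mul_sum]
        ring

lemma norm_dotProduct_cmat_mulVec_le {l : ℕ} (A : Matrix (Fin l) (Fin l) ℝ) (x y : Fin l → ℂ) :
    ‖x ⬝ᵥ (cmat A *ᵥ y)‖ ≤ opNorm A * (l / 2 * (∑ i, ‖x i‖ ^ 2 + ∑ i, ‖y i‖ ^ 2)) := by
  calc ‖x ⬝ᵥ (cmat A *ᵥ y)‖ = ‖∑ i, ∑ j, x i * (A i j * y j)‖ := by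
        simp [dotProduct, mulVec, cmat, Finset.mul_sum]
    _ ≤ opNorm A * ∑ i, ∑ j, ‖x i‖ * ‖y j‖ := by
        simp only [Finset.mul_sum]
        refine (norm_sum_le _ _).trans <| Finset.sum_le_sum fun i _ =>
          (norm_sum_le _ _).trans <| Finset.sum_le_sum fun j _ => ?_
        rw [norm_mul, norm_mul, Complex.norm_real, Real.norm_eq_abs, mul_left_comm]
        exact mul_le_mul_of_nonneg_right (abs_apply_le_opNorm A i j) (by positivity)
    _ ≤ opNorm A * (l / 2 * (∑ i, ‖x i‖ ^ 2 + ∑ i, ‖y i‖ ^ 2)) :=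
        mul_le_mul_of_nonneg_left
          (by simpa using sum_sum_mul_le (fun i => ‖x i‖) (fun j => ‖y j‖)) (norm_nonneg _)

section Wronskian

variable {l : ℕ} {D V : ℕ → Matrix (Fin l) (Fin l) ℝ} {z : ℂ} {u v : ℕ → Fin l → ℂ}

lemma wronskianN_succ {n : ℕ} (hD : (D n).IsSymm) (hV : (V n).IsSymm)
    (hu : cmat (D (n - 1)) *ᵥ u (n - 1) + cmat (D n) *ᵥ u (n + 1) + cmat (V n) *ᵥ u n = z • u n)
    (hv : cmat (D (n - 1)) *ᵥ v (n - 1) + cmat (D n) *ᵥ v (n + 1) + cmat (V n) *ᵥ v n = z • v n) :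
    wronskianN D u v (n + 1) = wronskianN D u v n := by
  have hu' : cmat (D n) *ᵥ u (n + 1)
      = z • u n - cmat (D (n - 1)) *ᵥ u (n - 1) - cmat (V n) *ᵥ u n := by
    rw [← hu]; abel
  have hv' : cmat (D n) *ᵥ v (n + 1)
      = z • v n - cmat (D (n - 1)) *ᵥ v (n - 1) - cmat (V n) *ᵥ v n := by
    rw [← hv]; abel
  have hDc : (cmat (D n)).IsSymm := hD.map _
  have hVc : (cmat (V n)).IsSymm := hV.map _
  unfold wronskianN
  rw [Nat.add_sub_cancel, hDc.dotProduct_mulVec_comm (u (n + 1)),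
    hDc.dotProduct_mulVec_comm (v (n + 1)), hu', hv']
  simp only [dotProduct_sub, dotProduct_smul, smul_eq_mul]
  rw [hVc.dotProduct_mulVec_comm (v n), dotProduct_comm (v n) (u n)]
  ring

lemma wronskianN_eq_wronskianN_one (hD : ∀ n, (D n).IsSymm) (hV : ∀ n, (V n).IsSymm)
    (hu : ∀ n : ℕ, 1 ≤ n → cmat (D (n - 1)) *ᵥ u (n - 1) + cmat (D n) *ᵥ u (n + 1)
        + cmat (V n) *ᵥ u n = z • u n)
    (hv : ∀ n : ℕ, 1 ≤ n → cmat (D (n - 1)) *ᵥ v (n - 1) + cmat (D n) *ᵥ v (n + 1)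
        + cmat (V n) *ᵥ v n = z • v n)
    (n : ℕ) (hn : 1 ≤ n) : wronskianN D u v n = wronskianN D u v 1 := by
  induction n, hn using Nat.le_induction with
  | base => rfl
  | succ n hn ih => rw [wronskianN_succ (hD n) (hV n) (hu n hn) (hv n hn), ih]

lemma norm_wronskianN_succ_le (n : ℕ) :
    ‖wronskianN D u v (n + 1)‖ ≤ opNorm (D n) * (l / 2 *
      (∑ i, ‖u (n + 1) i‖ ^ 2 + ∑ i, ‖v n i‖ ^ 2 + ∑ i, ‖v (n + 1) i‖ ^ 2 + ∑ i, ‖u n i‖ ^ 2)) := by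
  unfold wronskianN
  rw [Nat.add_sub_cancel]
  refine (norm_sub_le _ _).trans ?_
  linarith [norm_dotProduct_cmat_mulVec_le (D n) (u (n + 1)) (v n),
    norm_dotProduct_cmat_mulVec_le (D n) (v (n + 1)) (u n)]

end Wronskian

lemma nonpos_of_le_mul_of_tendsto_sum_inv {a c : ℕ → ℝ} {w : ℝ} (ha : ∀ n, 0 ≤ a n)
    (hdiv : Tendsto (fun N => ∑ k ∈ Finset.range N, (a k)⁻¹) atTop atTop) (hc : Summable c)
    (h : ∀ n, w ≤ a n * c n) : w ≤ 0 := by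
  by_contra! hw
  have hc_pos : ∀ n, 0 < c n := fun n => pos_of_mul_pos_right (hw.trans_le (h n)) (ha n)
  have hbound : ∀ N, (∑ k ∈ Finset.range N, (a k)⁻¹) * w ≤ ∑' n, c n := fun N =>
    calc (∑ k ∈ Finset.range N, (a k)⁻¹) * w = ∑ k ∈ Finset.range N, (a k)⁻¹ * w :=
          Finset.sum_mul _ _ _
      _ ≤ ∑ k ∈ Finset.range N, c k := Finset.sum_le_sum fun k _ =>
          inv_mul_le_of_le_mul₀ (ha k) (hc_pos k).le (h k)
      _ ≤ ∑' n, c n := hc.sum_le_tsum _ fun k _ => (hc_pos k).le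
  obtain ⟨N, hN⟩ := ((hdiv.atTop_mul_const hw).eventually_gt_atTop (∑' n, c n)).exists
  exact (hbound N).not_gt hN

theorem wronskian_eq_zero_of_l2_solutions_general (l : ℕ)
    (D V : ℕ → Matrix (Fin l) (Fin l) ℝ)
    (hDsymm : ∀ n, (D n).IsSymm) (hVsymm : ∀ n, (V n).IsSymm)
    (hdiv : Tendsto (fun N : ℕ => ∑ k ∈ Finset.range N, (opNorm (D k))⁻¹) atTop atTop)
    (z : ℂ) (u v : ℕ → Fin l → ℂ)
    (hu : ∀ n : ℕ, 1 ≤ n → cmat (D (n - 1)) *ᵥ u (n - 1) + cmat (D n) *ᵥ u (n + 1)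
        + cmat (V n) *ᵥ u n = z • u n)
    (hv : ∀ n : ℕ, 1 ≤ n → cmat (D (n - 1)) *ᵥ v (n - 1) + cmat (D n) *ᵥ v (n + 1)
        + cmat (V n) *ᵥ v n = z • v n)
    (hul2 : Summable (fun n : ℕ => ∑ i, ‖u n i‖ ^ 2))
    (hvl2 : Summable (fun n : ℕ => ∑ i, ‖v n i‖ ^ 2)) :
    ∀ n : ℕ, 1 ≤ n → wronskianN D u v n = 0 := by
  have hconst := wronskianN_eq_wronskianN_one hDsymm hVsymm hu hv
  have hbound (n : ℕ) :=
    hconst (n + 1) (Nat.le_add_left 1 n) ▸ norm_wronskianN_succ_le (u := u) (v := v) n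
  have hsummable : Summable fun n => l / 2 * (∑ i, ‖u (n + 1) i‖ ^ 2 + ∑ i, ‖v n i‖ ^ 2
      + ∑ i, ‖v (n + 1) i‖ ^ 2 + ∑ i, ‖u n i‖ ^ 2) :=
    (((((summable_nat_add_iff 1).mpr hul2).add hvl2).add
      ((summable_nat_add_iff 1).mpr hvl2)).add hul2).mul_left _
  have hW := nonpos_of_le_mul_of_tendsto_sum_inv (fun k => norm_nonneg _) hdiv hsummable hbound
  intro n hn
  rw [hconst n hn]
  exact norm_le_zero_iff.mp hW

/-- If `Σ_{k=0}^∞ 1/‖D_k‖ = ∞`, then any two square-summable solutions of the eigenvalue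
equation at the same `z ∈ ℂ` have vanishing Wronskian. -/
theorem wronskian_eq_zero_of_l2_solutions (l : ℕ) (hl : 1 ≤ l)
    (D V : ℕ → Matrix (Fin l) (Fin l) ℝ)
    (hDsymm : ∀ n, (D n).IsSymm) (hVsymm : ∀ n, (V n).IsSymm)
    (hDinv : ∀ n, IsUnit (D n).det)
    (hdiv : Tendsto (fun N : ℕ => ∑ k ∈ Finset.range N, (opNorm (D k))⁻¹) atTop atTop)
    (z : ℂ) (u v : ℕ → Fin l → ℂ)
    (hu : ∀ n : ℕ, 1 ≤ n → cmat (D (n - 1)) *ᵥ u (n - 1) + cmat (D n) *ᵥ u (n + 1)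
        + cmat (V n) *ᵥ u n = z • u n)
    (hv : ∀ n : ℕ, 1 ≤ n → cmat (D (n - 1)) *ᵥ v (n - 1) + cmat (D n) *ᵥ v (n + 1)
        + cmat (V n) *ᵥ v n = z • v n)
    (hul2 : Summable (fun n : ℕ => ∑ i, ‖u n i‖ ^ 2))
    (hvl2 : Summable (fun n : ℕ => ∑ i, ‖v n i‖ ^ 2)) :
    ∀ n : ℕ, 1 ≤ n → wronskianN D u v n = 0 :=
  wronskian_eq_zero_of_l2_solutions_general l D V hDsymm hVsymm hdiv z u v hu hv hul2 hvl2
end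
end

section
/- Let x ∈ ℝ, y > 0 and z = x + iy. Let φ and ψ be the Dirichlet and Neumann matrix solutions of the eigenvalue equation at x, and let F = (F_n)_{n≥0} be a matrix solution of the eigenvalue equation at z with F_0 = I and F_1 = −M D_0 for some l×l complex matrix M. Then for every n ≥ 1, F_n = ψ_n − φ_n M D_0 − iy ψ_n Σ_{k=1}^{n} D_0^{-1} φ_k^t F_k + iy φ_n Σ_{k=1}^{n} D_0^{-1} ψ_k^t F_k. -/
/-!
Since `D` and `V` are symmetric, the Wronskian `W_n(u, F) = u_nᵀ D_n F_{n+1} - u_{n+1}ᵀ D_n F_n` of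
a solution `u` at `x` and a solution `F` at `z` grows by `(z - x) u_{n+1}ᵀ F_{n+1}` at each step,
so `W_n(φ, F)` and `W_n(ψ, F)` are, up to their values at `n = 0`, the two sums of the theorem.
Conversely `F_n = φ_n D_0⁻¹ W_n(ψ, F) - ψ_n D_0⁻¹ W_n(φ, F)`, because the kernel
`K(n, k) = ψ_n D_0⁻¹ φ_kᵀ - φ_n D_0⁻¹ ψ_kᵀ` satisfies `K(n, n) = 0` and `K(n, n + 1) = D_n⁻¹`
(the transfer matrices of the pair `ψ, φ` are symplectic); these identities follow by a two-step
induction from the three-term recurrence of `K` in each variable.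
-/

open Matrix

noncomputable section

/-- `U` is a matrix solution of the eigenvalue equation at `w`:
`D_n U_{n+1} + D_{n-1} U_{n-1} + V_n U_n = w U_n` for all `n ≥ 1`. -/
def IsMatSol {l : ℕ} (D V : ℕ → Matrix (Fin l) (Fin l) ℝ) (w : ℂ)
    (U : ℕ → Matrix (Fin l) (Fin l) ℂ) : Prop :=
  ∀ n : ℕ, 1 ≤ n →
    cmat (D n) * U (n + 1) + cmat (D (n - 1)) * U (n - 1) + cmat (V n) * U n = w • U n

open Finset

namespace Jacobi

variable {ι R : Type*} [Fintype ι] [CommRing R]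

/-- `IsMatSol` over an arbitrary commutative ring, shifted by one so that the equation at `n + 1`
involves no truncated subtraction. -/
def IsSol (d v : ℕ → Matrix ι ι R) (z : R) (u : ℕ → Matrix ι ι R) : Prop :=
  ∀ n, d (n + 1) * u (n + 2) + d n * u n + v (n + 1) * u (n + 1) = z • u (n + 1)

def wronskian (d u G : ℕ → Matrix ι ι R) (n : ℕ) : Matrix ι ι R :=
  (u n)ᵀ * d n * G (n + 1) - (u (n + 1))ᵀ * d n * G n

def cauchyKernel (e : Matrix ι ι R) (φ ψ : ℕ → Matrix ι ι R) (n k : ℕ) : Matrix ι ι R :=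
  ψ n * e * (φ k)ᵀ - φ n * e * (ψ k)ᵀ

variable {d v : ℕ → Matrix ι ι R} {z : R} {u : ℕ → Matrix ι ι R}

theorem IsSol.mul_succ_succ (hu : IsSol d v z u) (n : ℕ) :
    d (n + 1) * u (n + 2) = z • u (n + 1) - v (n + 1) * u (n + 1) - d n * u n := by
  rw [← hu n]; abel

theorem IsSol.transpose_mul_succ_succ (hu : IsSol d v z u) (hd : ∀ n, (d n).IsSymm)
    (hv : ∀ n, (v n).IsSymm) (n : ℕ) :
    (u (n + 2))ᵀ * d (n + 1) = z • (u (n + 1))ᵀ - (u (n + 1))ᵀ * v (n + 1) - (u n)ᵀ * d n := by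
  have h := congrArg transpose (hu.mul_succ_succ n)
  simpa only [transpose_mul, transpose_sub, transpose_smul, (hd _).eq, (hv _).eq] using h

theorem wronskian_succ (hd : ∀ n, (d n).IsSymm) (hv : ∀ n, (v n).IsSymm) {z' : R}
    {G : ℕ → Matrix ι ι R} (hu : IsSol d v z u) (hG : IsSol d v z' G) (n : ℕ) :
    wronskian d u G (n + 1) = wronskian d u G n + (z' - z) • ((u (n + 1))ᵀ * G (n + 1)) := by
  have hG' := hG.mul_succ_succ n
  have hu' := hu.transpose_mul_succ_succ hd hv n
  simp only [wronskian, mul_assoc] at hG' ⊢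
  rw [hG', ← mul_assoc (u (n + 2))ᵀ, hu']
  simp only [mul_sub, sub_mul, mul_smul_comm, smul_mul_assoc, sub_smul, mul_assoc]
  abel

theorem wronskian_eq_sum (hd : ∀ n, (d n).IsSymm) (hv : ∀ n, (v n).IsSymm) {z' : R}
    {G : ℕ → Matrix ι ι R} (hu : IsSol d v z u) (hG : IsSol d v z' G) (n : ℕ) :
    wronskian d u G n = wronskian d u G 0 + (z' - z) • ∑ k ∈ Icc 1 n, (u k)ᵀ * G k := by
  induction n with
  | zero => simp
  | succ n ih =>
    rw [wronskian_succ hd hv hu hG, ih, sum_Icc_succ_top (by omega), smul_add, add_assoc]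

section Kernel

variable {φ ψ : ℕ → Matrix ι ι R}

theorem cauchyKernel_left_succ_succ (e : Matrix ι ι R) (hφ : IsSol d v z φ)
    (hψ : IsSol d v z ψ) (n k : ℕ) :
    d (n + 1) * cauchyKernel e φ ψ (n + 2) k = z • cauchyKernel e φ ψ (n + 1) k
      - v (n + 1) * cauchyKernel e φ ψ (n + 1) k - d n * cauchyKernel e φ ψ n k := by
  simp only [cauchyKernel, mul_sub, ← mul_assoc, hφ.mul_succ_succ, hψ.mul_succ_succ]
  simp only [sub_mul, smul_mul_assoc, smul_sub, mul_assoc]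
  abel

theorem cauchyKernel_right_succ_succ (e : Matrix ι ι R) (hd : ∀ n, (d n).IsSymm)
    (hv : ∀ n, (v n).IsSymm) (hφ : IsSol d v z φ) (hψ : IsSol d v z ψ) (n k : ℕ) :
    cauchyKernel e φ ψ k (n + 2) * d (n + 1) = z • cauchyKernel e φ ψ k (n + 1)
      - cauchyKernel e φ ψ k (n + 1) * v (n + 1) - cauchyKernel e φ ψ k n * d n := by
  simp only [cauchyKernel, sub_mul, mul_assoc, hφ.transpose_mul_succ_succ hd hv,
    hψ.transpose_mul_succ_succ hd hv]
  simp only [mul_sub, mul_smul_comm, smul_sub, ← mul_assoc]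
  abel

variable [DecidableEq ι]

theorem eq_wronskian_sub_wronskian (e : Matrix ι ι R) (G : ℕ → Matrix ι ι R) {n : ℕ}
    (hnn : cauchyKernel e φ ψ n n = 0) (hns : cauchyKernel e φ ψ n (n + 1) * d n = 1) :
    G n = φ n * e * wronskian d ψ G n - ψ n * e * wronskian d φ G n := by
  have h : φ n * e * wronskian d ψ G n - ψ n * e * wronskian d φ G n
      = cauchyKernel e φ ψ n (n + 1) * d n * G n - cauchyKernel e φ ψ n n * d n * G (n + 1) := by
    simp only [wronskian, cauchyKernel]; noncomm_ring
  rw [h, hnn, hns, one_mul, zero_mul, zero_mul, sub_zero]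

theorem cauchyKernel_dirichlet_neumann (hd : ∀ n, (d n).IsSymm) (hv : ∀ n, (v n).IsSymm)
    (hdet : ∀ n, IsUnit (d n).det) (hφ : IsSol d v z φ) (hφ0 : φ 0 = 0) (hφ1 : φ 1 = 1)
    (hψ : IsSol d v z ψ) (hψ0 : ψ 0 = 1) (hψ1 : ψ 1 = 0) (n : ℕ) :
    cauchyKernel (d 0)⁻¹ φ ψ n n = 0 ∧ cauchyKernel (d 0)⁻¹ φ ψ (n + 1) (n + 1) = 0 ∧
      cauchyKernel (d 0)⁻¹ φ ψ (n + 1) n = -(d n)⁻¹ ∧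
      cauchyKernel (d 0)⁻¹ φ ψ n (n + 1) = (d n)⁻¹ := by
  set K := cauchyKernel (d 0)⁻¹ φ ψ with hK
  have hdu : ∀ n, IsUnit (d n) := fun n => (isUnit_iff_isUnit_det _).mpr (hdet n)
  induction n with
  | zero => simp [K, cauchyKernel, hφ0, hφ1, hψ0, hψ1]
  | succ n ih =>
    obtain ⟨hnn, hnn', hsn, hns⟩ := ih
    have hL := cauchyKernel_left_succ_succ (d 0)⁻¹ hφ hψ n
    have hR := cauchyKernel_right_succ_succ (d 0)⁻¹ hd hv hφ hψ n
    rw [← hK] at hL hR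
    have hdsn : d (n + 1) * K (n + 2) (n + 1) = -1 := by
      rw [hL, hnn', hns, mul_nonsing_inv _ (hdet n)]; simp
    have hsn' : K (n + 2) (n + 1) = -(d (n + 1))⁻¹ := by
      rw [inv_eq_right_inv (show d (n + 1) * -K (n + 2) (n + 1) = 1 by simp [hdsn]), neg_neg]
    have hns' : K (n + 1) (n + 2) = (d (n + 1))⁻¹ :=
      (inv_eq_left_inv (by rw [hR, hnn', hsn, neg_mul, nonsing_inv_mul _ (hdet n)]; simp)).symm
    have hdss : d (n + 1) * (K (n + 2) (n + 2) * d (n + 1)) = 0 :=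
      calc d (n + 1) * (K (n + 2) (n + 2) * d (n + 1))
          = z • (d (n + 1) * K (n + 2) (n + 1)) - d (n + 1) * K (n + 2) (n + 1) * v (n + 1)
            - d (n + 1) * K (n + 2) n * d n := by
            rw [hR]; simp only [mul_sub, mul_smul_comm, mul_assoc]
        _ = 0 := by
            rw [hdsn, hL, hsn, hnn]
            simp only [neg_mul, one_mul, smul_mul_assoc, mul_assoc, sub_mul, mul_neg, mul_zero,
              sub_zero, nonsing_inv_mul _ (hdet n), mul_one]
            abel
    exact ⟨hnn', (hdu _).mul_left_eq_zero.mp ((hdu _).mul_right_eq_zero.mp hdss), hsn', hns'⟩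

end Kernel

end Jacobi

theorem IsMatSol.isSol {l : ℕ} {D V : ℕ → Matrix (Fin l) (Fin l) ℝ} {w : ℂ}
    {U : ℕ → Matrix (Fin l) (Fin l) ℂ} (h : IsMatSol D V w U) :
    Jacobi.IsSol (fun n => cmat (D n)) (fun n => cmat (V n)) w U :=
  fun n => by simpa using h (n + 1) (by omega)

theorem isUnit_det_cmat {l : ℕ} {A : Matrix (Fin l) (Fin l) ℝ} (h : IsUnit A.det) :
    IsUnit (cmat A).det := by
  have h' := h.map Complex.ofRealHom
  rwa [RingHom.map_det] at h'

theorem matSol_representation_general (l : ℕ)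
    (D V : ℕ → Matrix (Fin l) (Fin l) ℝ)
    (hDsymm : ∀ n, (D n).IsSymm) (hVsymm : ∀ n, (V n).IsSymm)
    (hDinv : ∀ n, IsUnit (D n).det)
    (x y : ℝ)
    (φ ψ F : ℕ → Matrix (Fin l) (Fin l) ℂ)
    (hφ : IsMatSol D V (x : ℂ) φ) (hφ0 : φ 0 = 0) (hφ1 : φ 1 = 1)
    (hψ : IsMatSol D V (x : ℂ) ψ) (hψ0 : ψ 0 = 1) (hψ1 : ψ 1 = 0)
    (M : Matrix (Fin l) (Fin l) ℂ)
    (hF : IsMatSol D V ((x : ℂ) + (y : ℂ) * Complex.I) F)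
    (hF0 : F 0 = 1) (hF1 : F 1 = -(M * cmat (D 0))) :
    ∀ n : ℕ, 1 ≤ n →
      F n = ψ n - φ n * M * cmat (D 0)
        - (Complex.I * (y : ℂ)) •
            (ψ n * ∑ k ∈ Finset.Icc 1 n, (cmat (D 0))⁻¹ * (φ k)ᵀ * F k)
        + (Complex.I * (y : ℂ)) •
            (φ n * ∑ k ∈ Finset.Icc 1 n, (cmat (D 0))⁻¹ * (ψ k)ᵀ * F k) := by
  have hd : ∀ n, (cmat (D n)).IsSymm := fun n => (hDsymm n).map _
  have hv : ∀ n, (cmat (V n)).IsSymm := fun n => (hVsymm n).map _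
  have hdet : ∀ n, IsUnit (cmat (D n)).det := fun n => isUnit_det_cmat (hDinv n)
  intro n _
  obtain ⟨hnn, -, -, hns⟩ := Jacobi.cauchyKernel_dirichlet_neumann hd hv hdet hφ.isSol hφ0 hφ1
    hψ.isSol hψ0 hψ1 n
  rw [Jacobi.eq_wronskian_sub_wronskian (d := fun n => cmat (D n)) _ F hnn
      (by rw [hns, nonsing_inv_mul _ (hdet n)]),
    Jacobi.wronskian_eq_sum hd hv hψ.isSol hF.isSol,
    Jacobi.wronskian_eq_sum hd hv hφ.isSol hF.isSol]
  simp only [Jacobi.wronskian, hφ0, hφ1, hψ0, hψ1, hF0, hF1, transpose_zero, transpose_one,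
    zero_mul, one_mul, mul_one, sub_zero, mul_neg, neg_zero, zero_sub, zero_add,
    add_sub_cancel_left]
  simp only [mul_sum, mul_assoc, mul_add, mul_neg, mul_smul_comm,
    nonsing_inv_mul_cancel_left (cmat (D 0)) _ (hdet 0), nonsing_inv_mul _ (hdet 0), mul_one]
  module

/-- **Lemma 3.1 of the paper**: representation of a square matrix solution `F` at `z = x + iy`
with `F_0 = I`, `F_1 = −M D_0` in terms of the Dirichlet and Neumann solutions `φ, ψ` at `x`. -/
theorem matSol_representation (l : ℕ) (hl : 1 ≤ l)
    (D V : ℕ → Matrix (Fin l) (Fin l) ℝ)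
    (hDsymm : ∀ n, (D n).IsSymm) (hVsymm : ∀ n, (V n).IsSymm)
    (hDinv : ∀ n, IsUnit (D n).det)
    (x y : ℝ) (hy : 0 < y)
    (φ ψ F : ℕ → Matrix (Fin l) (Fin l) ℂ)
    (hφ : IsMatSol D V (x : ℂ) φ) (hφ0 : φ 0 = 0) (hφ1 : φ 1 = 1)
    (hψ : IsMatSol D V (x : ℂ) ψ) (hψ0 : ψ 0 = 1) (hψ1 : ψ 1 = 0)
    (M : Matrix (Fin l) (Fin l) ℂ)
    (hF : IsMatSol D V ((x : ℂ) + (y : ℂ) * Complex.I) F)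
    (hF0 : F 0 = 1) (hF1 : F 1 = -(M * cmat (D 0))) :
    ∀ n : ℕ, 1 ≤ n →
      F n = ψ n - φ n * M * cmat (D 0)
        - (Complex.I * (y : ℂ)) •
            (ψ n * ∑ k ∈ Finset.Icc 1 n, (cmat (D 0))⁻¹ * (φ k)ᵀ * F k)
        + (Complex.I * (y : ℂ)) •
            (φ n * ∑ k ∈ Finset.Icc 1 n, (cmat (D 0))⁻¹ * (ψ k)ᵀ * F k) :=
  matSol_representation_general l D V hDsymm hVsymm hDinv x y φ ψ F hφ hφ0 hφ1 hψ hψ0 hψ1 M hF hF0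
    hF1
end
end

section
/- (Exponential decay of the Green function off the spectrum.) Let H be the bounded self-adjoint block Jacobi operator on ℓ²({1,2,...}; ℂ^l) defined by (Hu)_1 = V_1 u_1 + D_1 u_2 and (Hu)_n = D_{n−1} u_{n−1} + V_n u_n + D_n u_{n+1} for n ≥ 2, where (D_n)_{n≥1} and (V_n)_{n≥1} are real symmetric l×l matrices with sup_n ‖D_n‖ < ∞ and sup_n ‖V_n‖ < ∞. Then for every z ∈ ℂ not in the spectrum of H there exist constants C > 0 and α > 0 such that for every n ≥ 1 and every v ∈ ℂ^l, ‖((H − z)^{-1}(δ_1 ⊗ v))_n‖ ≤ C e^{−α n} ‖v‖, where δ_1 ⊗ v denotes the sequence equal to v at index 1 and 0 elsewhere. -/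
open Matrix

noncomputable section

/-- Multiplication of a vector of `EuclideanSpace ℂ (Fin l)` by (the complexification of)
a real `l×l` matrix. -/
def matAct {l : ℕ} (A : Matrix (Fin l) (Fin l) ℝ) (v : EuclideanSpace ℂ (Fin l)) :
    EuclideanSpace ℂ (Fin l) :=
  (WithLp.equiv 2 (Fin l → ℂ)).symm
    ((A.map Complex.ofReal) *ᵥ (WithLp.equiv 2 (Fin l → ℂ) v))

/-!
Combes–Thomas argument. Formally conjugating `H` by `diag(ω^n)` gives the Jacobi matrix
`H_ω = ω⁻¹ S + V + ω T`, with `S`, `V`, `T` the lower, diagonal and upper parts of `H`. These are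
bounded, being Fourier coefficients of `ζ ↦ U_ζ⁻¹ H U_ζ` for the unitaries `U_ζ = diag(ζ^n)`,
`|ζ| = 1`; so `ω ↦ H_ω` is continuous with `H_1 = H`, and `H_r - z` stays invertible for some
real `r < 1`. As `H W_r = W_r H_r` for the bounded weight `W_r = diag(r^n)`, which fixes `δ₁`,
we get `(H - z)⁻¹ δ₁ = W_r (H_r - z)⁻¹ δ₁`, whose `n`-th entry is `O(r^n)`.
-/

open Complex Filter Topology

namespace lp

variable {α 𝕜 : Type*} {E : α → Type*} {p : ENNReal} [Fact (1 ≤ p)] [NormedField 𝕜]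
  [∀ i, NormedAddCommGroup (E i)] [∀ i, NormedSpace 𝕜 (E i)]

def diagonalCLM (c : α → 𝕜) (hc : ∀ i, ‖c i‖ ≤ 1) : lp E p →L[𝕜] lp E p :=
  have hle (u : lp E p) (i : α) : ‖c i • u i‖ ≤ ‖u i‖ :=
    (norm_smul_le _ _).trans (mul_le_of_le_one_left (norm_nonneg _) (hc i))
  LinearMap.mkContinuous
    { toFun := fun u => ⟨fun i => c i • u i, (lp.memℓp u).mono' (hle u)⟩
      map_add' := fun u v => lp.ext <| funext fun i => smul_add _ _ _
      map_smul' := fun a u => lp.ext <| funext fun i => smul_comm _ _ _ }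
    1 fun u => by
      rw [one_mul]
      exact lp.norm_mono (zero_lt_one.trans_le (Fact.out : 1 ≤ p)).ne' (hle u)

@[simp]
theorem diagonalCLM_apply (c : α → 𝕜) (hc : ∀ i, ‖c i‖ ≤ 1) (u : lp E p) (i : α) :
    diagonalCLM c hc u i = c i • u i :=
  rfl

end lp

theorem Ring.inverse_mul_eq_mul_inverse {M : Type*} [MonoidWithZero M] {a b w : M}
    (ha : IsUnit a) (hb : IsUnit b) (h : a * w = w * b) :
    Ring.inverse a * w = w * Ring.inverse b := by
  obtain ⟨a, rfl⟩ := ha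
  obtain ⟨b, rfl⟩ := hb
  simpa only [Ring.inverse_unit] using
    (SemiconjBy.units_inv_right (x := b) (y := a) h.symm).eq.symm

theorem matAct_smul {l : ℕ} (A : Matrix (Fin l) (Fin l) ℝ) (c : ℂ)
    (v : EuclideanSpace ℂ (Fin l)) :
    matAct A (c • v) = c • matAct A v := by
  simp [matAct, Matrix.mulVec_smul]

theorem Complex.norm_I_pow (k : ℕ) : ‖I ^ k‖ = 1 := by simp

namespace BlockJacobi

variable {l : ℕ} {D V : ℕ → Matrix (Fin l) (Fin l) ℝ}

local notation "ℋ" => lp (fun _ : ℕ => EuclideanSpace ℂ (Fin l)) 2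

variable (D V) in
/-- Entry `n` of `diag(ω^{-n}) J diag(ω^n) u`, where `J` is the block Jacobi matrix. -/
def twistedApply (ω : ℂ) (u : ℕ → EuclideanSpace ℂ (Fin l)) (n : ℕ) : EuclideanSpace ℂ (Fin l) :=
  if n = 0 then matAct (V 1) (u 0) + ω • matAct (D 1) (u 1)
  else ω⁻¹ • matAct (D n) (u (n - 1)) + matAct (V (n + 1)) (u n)
    + ω • matAct (D (n + 1)) (u (n + 1))

variable (D V) in
def IsBlockJacobi (H : ℋ →L[ℂ] ℋ) : Prop :=
  ∀ u : ℋ, ∀ n : ℕ, H u n = twistedApply D V 1 u n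

def weight (ω : ℂ) (hω : ‖ω‖ ≤ 1) : ℋ →L[ℂ] ℋ :=
  lp.diagonalCLM (fun n => ω ^ n) fun n => by simpa using pow_le_one₀ (norm_nonneg ω) hω

@[simp]
theorem weight_apply (ω : ℂ) (hω : ‖ω‖ ≤ 1) (u : ℋ) (n : ℕ) :
    weight ω hω u n = ω ^ n • u n :=
  rfl

theorem norm_weight_apply_le (ω : ℂ) (hω : ‖ω‖ ≤ 1) (u : ℋ) (n : ℕ) :
    ‖weight ω hω u n‖ ≤ ‖ω‖ ^ n * ‖u‖ := by
  rw [weight_apply, norm_smul, norm_pow]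
  gcongr
  exact lp.norm_apply_le_norm two_ne_zero u n

theorem weight_single (ω : ℂ) (hω : ‖ω‖ ≤ 1) (v : EuclideanSpace ℂ (Fin l)) :
    weight ω hω (lp.single 2 0 v) = lp.single 2 0 v :=
  lp.ext <| funext fun n => by rcases n with _ | n <;> simp

theorem IsBlockJacobi.apply_weight_apply {H : ℋ →L[ℂ] ℋ} (hH : IsBlockJacobi D V H)
    {ω : ℂ} (hω0 : ω ≠ 0) (hω : ‖ω‖ ≤ 1) (u : ℋ) (n : ℕ) :
    H (weight ω hω u) n = ω ^ n • twistedApply D V ω u n := by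
  rw [hH]
  rcases n with _ | n
  · simp [twistedApply, matAct_smul]
  · simp only [twistedApply, weight_apply, matAct_smul, Nat.add_sub_cancel, if_neg n.succ_ne_zero]
    match_scalars <;> field_simp <;> ring

theorem IsBlockJacobi.weight_inv_apply_weight {H : ℋ →L[ℂ] ℋ} (hH : IsBlockJacobi D V H)
    {ζ : ℂ} (hζ : ‖ζ‖ = 1) (u : ℋ) (n : ℕ) :
    weight ζ⁻¹ (by simp [hζ]) (H (weight ζ hζ.le u)) n = twistedApply D V ζ u n := by
  have hζ0 : ζ ≠ 0 := norm_ne_zero_iff.mp (by simp [hζ])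
  rw [weight_apply, hH.apply_weight_apply hζ0, smul_smul, inv_pow,
    inv_mul_cancel₀ (pow_ne_zero _ hζ0), one_smul]

/-- Since `diag(ζ^{-n}) H diag(ζ^n)` has matrix `ζ⁻¹ S + V + ζ T`, averaging it against
`1 + ζ / ω + ω / ζ` over the fourth roots of unity `ζ` gives `ω⁻¹ S + V + ω T`. -/
def twistedOp (H : ℋ →L[ℂ] ℋ) (ω : ℂ) : ℋ →L[ℂ] ℋ :=
  (4 : ℂ)⁻¹ • ∑ k ∈ Finset.range 4, (1 + I ^ k / ω + ω / I ^ k) •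
    (weight (I ^ k)⁻¹ (by simp) ∘L H ∘L weight (I ^ k) (norm_I_pow k).le)

theorem IsBlockJacobi.twistedOp_apply {H : ℋ →L[ℂ] ℋ} (hH : IsBlockJacobi D V H)
    (ω : ℂ) (u : ℋ) (n : ℕ) : twistedOp H ω u n = twistedApply D V ω u n := by
  simp only [twistedOp, Finset.sum_range_succ, Finset.sum_range_zero, zero_add,
    _root_.add_apply, _root_.smul_apply, ContinuousLinearMap.comp_apply,
    lp.coeFn_add, lp.coeFn_smul, Pi.add_apply, Pi.smul_apply,
    hH.weight_inv_apply_weight (norm_I_pow _), twistedApply]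
  split_ifs <;> match_scalars <;> grind [I_sq]

theorem IsBlockJacobi.twistedOp_one {H : ℋ →L[ℂ] ℋ} (hH : IsBlockJacobi D V H) :
    twistedOp H 1 = H :=
  ContinuousLinearMap.ext fun u => lp.ext <| funext fun n => by rw [hH.twistedOp_apply, hH]

theorem continuousAt_twistedOp_one (H : ℋ →L[ℂ] ℋ) : ContinuousAt (twistedOp H) 1 := by
  unfold twistedOp
  fun_prop (disch := simp)

theorem IsBlockJacobi.sub_algebraMap_mul_weight {H : ℋ →L[ℂ] ℋ} (hH : IsBlockJacobi D V H)
    {ω : ℂ} (hω0 : ω ≠ 0) (hω : ‖ω‖ ≤ 1) (z : ℂ) :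
    (H - algebraMap ℂ _ z) * weight ω hω = weight ω hω * (twistedOp H ω - algebraMap ℂ _ z) := by
  have hcomm : H * weight ω hω = weight ω hω * twistedOp H ω :=
    ContinuousLinearMap.ext fun u => lp.ext <| funext fun n => by
      simp [hH.apply_weight_apply hω0, hH.twistedOp_apply]
  rw [sub_mul, mul_sub, Algebra.commutes, hcomm]

theorem IsBlockJacobi.exists_isUnit_twistedOp_sub {H : ℋ →L[ℂ] ℋ} (hH : IsBlockJacobi D V H)
    {z : ℂ} (hz : IsUnit (H - algebraMap ℂ _ z)) :
    ∃ r ∈ Set.Ioo (0 : ℝ) 1, IsUnit (twistedOp H r - algebraMap ℂ _ z) := by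
  have hcont : ContinuousAt (fun ω => twistedOp H ω - algebraMap ℂ _ z) 1 :=
    (continuousAt_twistedOp_one H).sub continuousAt_const
  have hnhds : ∀ᶠ ω in 𝓝 1, IsUnit (twistedOp H ω - algebraMap ℂ _ z) :=
    hcont.eventually_mem (Units.isOpen.mem_nhds (by simpa [hH.twistedOp_one] using hz))
  have hreal : Tendsto (fun r : ℝ => (r : ℂ)) (𝓝[<] 1) (𝓝 1) :=
    (continuous_ofReal.tendsto' 1 1 ofReal_one).mono_left nhdsWithin_le_nhds
  have hIoo : ∀ᶠ r : ℝ in 𝓝[<] 1, r ∈ Set.Ioo 0 1 := Ioo_mem_nhdsLT zero_lt_one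
  exact (hIoo.and (hreal.eventually hnhds)).exists

theorem IsBlockJacobi.ring_inverse_apply_single {H : ℋ →L[ℂ] ℋ} (hH : IsBlockJacobi D V H)
    {ω : ℂ} (hω0 : ω ≠ 0) (hω : ‖ω‖ ≤ 1) {z : ℂ} (hHz : IsUnit (H - algebraMap ℂ _ z))
    (hωz : IsUnit (twistedOp H ω - algebraMap ℂ _ z)) (v : EuclideanSpace ℂ (Fin l)) :
    Ring.inverse (H - algebraMap ℂ _ z) (lp.single 2 0 v)
      = weight ω hω (Ring.inverse (twistedOp H ω - algebraMap ℂ _ z) (lp.single 2 0 v)) := by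
  conv_lhs => rw [← weight_single ω hω v]
  exact congr($(Ring.inverse_mul_eq_mul_inverse hHz hωz
    (hH.sub_algebraMap_mul_weight hω0 hω z)) (lp.single 2 0 v))

end BlockJacobi

open BlockJacobi in
/-- Site `n + 1` of the half line is the index `n : ℕ`. -/
theorem green_function_exponential_decay_general (l : ℕ)
    (D V : ℕ → Matrix (Fin l) (Fin l) ℝ)
    (H : lp (fun _ : ℕ => EuclideanSpace ℂ (Fin l)) 2 →L[ℂ]
         lp (fun _ : ℕ => EuclideanSpace ℂ (Fin l)) 2)
    (hHact : ∀ u : lp (fun _ : ℕ => EuclideanSpace ℂ (Fin l)) 2, ∀ n : ℕ,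
      H u n = if n = 0 then matAct (V 1) (u 0) + matAct (D 1) (u 1)
        else matAct (D n) (u (n - 1)) + matAct (V (n + 1)) (u n)
          + matAct (D (n + 1)) (u (n + 1)))
    (z : ℂ) (hz : z ∉ spectrum ℂ H) :
    ∃ C : ℝ, 0 < C ∧ ∃ α : ℝ, 0 < α ∧
      ∀ n : ℕ, ∀ v : EuclideanSpace ℂ (Fin l),
        ‖(Ring.inverse (H - algebraMap ℂ _ z) (lp.single 2 0 v)) n‖
          ≤ C * Real.exp (-α * ((n : ℝ) + 1)) * ‖v‖ := by
  have hH : IsBlockJacobi D V H := fun u n => by simpa [twistedApply] using hHact u n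
  have hHz : IsUnit (H - algebraMap ℂ _ z) := by simpa using (spectrum.notMem_iff.mp hz).neg
  obtain ⟨r, ⟨hr0, hr1⟩, hr⟩ := hH.exists_isUnit_twistedOp_sub hHz
  have hnorm : ‖(r : ℂ)‖ = r := by simp [hr0.le]
  have hr' : ‖(r : ℂ)‖ ≤ 1 := hnorm.le.trans hr1.le
  set R := Ring.inverse (twistedOp H r - algebraMap ℂ _ z)
  refine ⟨(‖R‖ + 1) / r, by positivity, -Real.log r, neg_pos.2 (Real.log_neg hr0 hr1), ?_⟩
  intro n v
  have hexp : Real.exp (-(-Real.log r) * ((n : ℝ) + 1)) = r ^ (n + 1) := by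
    rw [neg_neg, mul_comm, ← Nat.cast_succ, Real.exp_nat_mul, Real.exp_log hr0]
  have hRv : ‖R (lp.single 2 0 v)‖ ≤ ‖R‖ * ‖v‖ := by
    simpa only [lp.norm_single two_pos] using R.le_opNorm (lp.single 2 0 v)
  rw [hH.ring_inverse_apply_single (ofReal_ne_zero.2 hr0.ne') hr' hHz hr, hexp]
  calc ‖weight r hr' (R (lp.single 2 0 v)) n‖ ≤ r ^ n * ‖R (lp.single 2 0 v)‖ :=
        (norm_weight_apply_le _ hr' _ n).trans_eq (by rw [hnorm])
    _ ≤ r ^ n * (‖R‖ * ‖v‖) := by gcongr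
    _ ≤ (‖R‖ + 1) / r * r ^ (n + 1) * ‖v‖ := by
        rw [div_mul_eq_mul_div, pow_succ, mul_div_assoc, mul_div_cancel_right₀ _ hr0.ne']
        nlinarith [norm_nonneg v, pow_pos hr0 n]

/-- **Exponential decay of the Green function off the spectrum.**  Sites of the half line
`{1, 2, ...}` are indexed by `n : ℕ`, with `n` standing for the site `n + 1`; thus
`(Hu)_1 = V_1 u_1 + D_1 u_2` reads `H u 0 = V 1 (u 0) + D 1 (u 1)`, and for `n ≥ 1`
`H u n = D n (u (n-1)) + V (n+1) (u n) + D (n+1) (u (n+1))`. -/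
theorem green_function_exponential_decay (l : ℕ) (hl : 1 ≤ l)
    (D V : ℕ → Matrix (Fin l) (Fin l) ℝ)
    (hDsymm : ∀ n, (D n).IsSymm) (hVsymm : ∀ n, (V n).IsSymm)
    (hDbdd : ∃ C : ℝ, ∀ n, opNorm (D n) ≤ C)
    (hVbdd : ∃ C : ℝ, ∀ n, opNorm (V n) ≤ C)
    (H : lp (fun _ : ℕ => EuclideanSpace ℂ (Fin l)) 2 →L[ℂ]
         lp (fun _ : ℕ => EuclideanSpace ℂ (Fin l)) 2)
    (hHsa : IsSelfAdjoint H)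
    (hHact : ∀ u : lp (fun _ : ℕ => EuclideanSpace ℂ (Fin l)) 2, ∀ n : ℕ,
      H u n = if n = 0 then matAct (V 1) (u 0) + matAct (D 1) (u 1)
        else matAct (D n) (u (n - 1)) + matAct (V (n + 1)) (u n)
          + matAct (D (n + 1)) (u (n + 1)))
    (z : ℂ) (hz : z ∉ spectrum ℂ H) :
    ∃ C : ℝ, 0 < C ∧ ∃ α : ℝ, 0 < α ∧
      ∀ n : ℕ, ∀ v : EuclideanSpace ℂ (Fin l),
        ‖(Ring.inverse (H - algebraMap ℂ _ z) (lp.single 2 0 v)) n‖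
          ≤ C * Real.exp (-α * ((n : ℝ) + 1)) * ‖v‖ :=
  green_function_exponential_decay_general l D V H hHact z hz
end
end

section
/- For all positive semidefinite Hermitian l×l complex matrices A and B and every r ∈ {1, ..., l}, one has tr(AB) ≥ λ_r(A) · λ_{l−r+1}(B), where λ_1(X) ≥ ... ≥ λ_l(X) denote the eigenvalues of a positive semidefinite Hermitian matrix X arranged in decreasing order (which coincide with its singular values). -/
/-!
Write `A = U diag(α) U*` and `B = V diag(β) V*`. Then `Re tr(AB) = ∑ⱼₖ αⱼ βₖ |(U*V)ⱼₖ|²`, and the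
matrix `(|(U*V)ⱼₖ|²)` is doubly stochastic because `U*V` is unitary. With both spectra sorted
decreasingly, the block of the first `r` rows and the first `l - r + 1` columns of a doubly
stochastic `l × l` matrix carries mass at least `r + (l - r + 1) - l = 1`, and on that block
`αⱼ βₖ ≥ λ_r(A) λ_{l-r+1}(B)`.
-/

open Matrix
open scoped ComplexOrder

noncomputable section

/-- The eigenvalues of a Hermitian matrix arranged in decreasing order; the index `i : Fin l`
corresponds to the eigenvalue `λ_{i+1}` (so `i = 0` gives the largest one and `i = l - 1` the
smallest one). -/
def eigsDesc {l : ℕ} (A : Matrix (Fin l) (Fin l) ℂ) (hA : A.IsHermitian) (i : Fin l) : ℝ :=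
  (hA.eigenvalues ∘ Tuple.sort hA.eigenvalues) i.rev

open Finset

namespace Matrix

theorem card_add_card_sub_card_le_sum_of_mem_doublyStochastic {n : Type*} [Fintype n]
    [DecidableEq n] {D : Matrix n n ℝ} (hD : D ∈ doublyStochastic ℝ n) (S T : Finset n) :
    (#S + #T : ℝ) - Fintype.card n ≤ ∑ j ∈ S, ∑ k ∈ T, D j k := by
  have hrow (j : n) : ∑ k ∈ T, D j k = 1 - ∑ k ∈ Tᶜ, D j k := by
    rw [← sum_row_of_mem_doublyStochastic hD j, ← sum_add_sum_compl T]
    ring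
  have hcompl : ∑ j ∈ S, ∑ k ∈ Tᶜ, D j k ≤ #Tᶜ :=
    calc ∑ j ∈ S, ∑ k ∈ Tᶜ, D j k ≤ ∑ j, ∑ k ∈ Tᶜ, D j k :=
          sum_le_sum_of_subset_of_nonneg (subset_univ S) fun j _ _ =>
            sum_nonneg fun k _ => nonneg_of_mem_doublyStochastic hD
      _ = ∑ k ∈ Tᶜ, ∑ j, D j k := sum_comm
      _ = #Tᶜ := by simp [sum_col_of_mem_doublyStochastic hD]
  rw [card_compl, Nat.cast_sub (card_le_univ T)] at hcompl
  simp only [hrow, sum_sub_distrib, sum_const, nsmul_eq_mul, mul_one]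
  linarith

theorem one_le_sum_Iic_Iic_rev_of_mem_doublyStochastic {n : ℕ}
    {D : Matrix (Fin n) (Fin n) ℝ} (hD : D ∈ doublyStochastic ℝ (Fin n)) (i : Fin n) :
    1 ≤ ∑ j ∈ Iic i, ∑ k ∈ Iic i.rev, D j k := by
  refine le_of_eq_of_le ?_ (card_add_card_sub_card_le_sum_of_mem_doublyStochastic hD _ _)
  rw [Fin.card_Iic, Fin.card_Iic, Fin.val_rev, Fintype.card_fin]
  push_cast [Nat.cast_sub (Nat.succ_le_of_lt i.isLt)]
  ring

theorem mul_le_sum_mul_mul_of_mem_doublyStochastic {n : ℕ} {a b : Fin n → ℝ}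
    (ha₀ : 0 ≤ a) (hb₀ : 0 ≤ b) (ha : Antitone a) (hb : Antitone b)
    {D : Matrix (Fin n) (Fin n) ℝ} (hD : D ∈ doublyStochastic ℝ (Fin n)) (i : Fin n) :
    a i * b i.rev ≤ ∑ j, ∑ k, a j * b k * D j k := by
  have hterm (j k : Fin n) : 0 ≤ a j * b k * D j k :=
    mul_nonneg (mul_nonneg (ha₀ j) (hb₀ k)) (nonneg_of_mem_doublyStochastic hD)
  calc a i * b i.rev
      ≤ a i * b i.rev * ∑ j ∈ Iic i, ∑ k ∈ Iic i.rev, D j k :=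
        le_mul_of_one_le_right (mul_nonneg (ha₀ i) (hb₀ _))
          (one_le_sum_Iic_Iic_rev_of_mem_doublyStochastic hD i)
    _ = ∑ j ∈ Iic i, ∑ k ∈ Iic i.rev, a i * b i.rev * D j k := by
        simp only [mul_sum]
    _ ≤ ∑ j ∈ Iic i, ∑ k ∈ Iic i.rev, a j * b k * D j k := by
        gcongr with j hj k hk
        exacts [nonneg_of_mem_doublyStochastic hD, hb₀ _, ha₀ j, ha (mem_Iic.mp hj),
          hb (mem_Iic.mp hk)]
    _ ≤ ∑ j, ∑ k, a j * b k * D j k := by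
        refine sum_le_sum_of_subset_of_nonneg (subset_univ _)
          (fun j _ _ => sum_nonneg fun k _ => hterm j k) |>.trans (sum_le_sum fun j _ => ?_)
        exact sum_le_sum_of_subset_of_nonneg (subset_univ _) fun k _ _ => hterm j k

section RCLike

variable {𝕜 n : Type*} [RCLike 𝕜] [Fintype n] [DecidableEq n]

theorem map_norm_sq_mem_doublyStochastic {U : Matrix n n 𝕜} (hU : U ∈ unitaryGroup n 𝕜) :
    U.map (‖·‖ ^ 2) ∈ doublyStochastic ℝ n := by
  rw [mem_doublyStochastic_iff_sum]
  refine ⟨fun _ _ => sq_nonneg _, fun j => ?_, fun k => ?_⟩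
  · have h := congrFun₂ (mem_unitaryGroup_iff.mp hU) j j
    simp only [mul_apply, star_apply, RCLike.star_def, RCLike.mul_conj, one_apply_eq] at h
    exact_mod_cast h
  · have h := congrFun₂ (mem_unitaryGroup_iff'.mp hU) k k
    simp only [mul_apply, star_apply, RCLike.star_def, RCLike.conj_mul, one_apply_eq] at h
    exact_mod_cast h

theorem re_trace_diagonal_mul_mul_diagonal_mul_conjTranspose (α β : n → ℝ) (W : Matrix n n 𝕜) :
    RCLike.re (diagonal (RCLike.ofReal ∘ α) * W * diagonal (RCLike.ofReal ∘ β) * Wᴴ).trace =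
      ∑ j, ∑ k, α j * β k * ‖W j k‖ ^ 2 := by
  rw [trace, map_sum]
  refine sum_congr rfl fun j _ => ?_
  rw [diag_apply, mul_apply, map_sum]
  refine sum_congr rfl fun k _ => ?_
  rw [mul_diagonal, diagonal_mul, conjTranspose_apply, RCLike.star_def, Function.comp_apply,
    Function.comp_apply, ← RCLike.ofReal_re (K := 𝕜) (α j * β k * ‖W j k‖ ^ 2)]
  push_cast
  rw [← RCLike.mul_conj]
  congr 1
  ring

theorem IsHermitian.re_trace_mul_eq_sum {A B : Matrix n n 𝕜} (hA : A.IsHermitian)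
    (hB : B.IsHermitian) :
    RCLike.re (A * B).trace = ∑ j, ∑ k, hA.eigenvalues j * hB.eigenvalues k *
      ‖(star (hA.eigenvectorUnitary : Matrix n n 𝕜) * hB.eigenvectorUnitary) j k‖ ^ 2 := by
  rw [← re_trace_diagonal_mul_mul_diagonal_mul_conjTranspose, ← star_eq_conjTranspose,
    star_mul, star_star]
  conv_lhs => rw [hA.spectral_theorem, hB.spectral_theorem]
  simp only [Unitary.conjStarAlgAut_apply, Matrix.mul_assoc]
  rw [trace_mul_comm (hA.eigenvectorUnitary : Matrix n n 𝕜)]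
  simp only [Matrix.mul_assoc]

end RCLike

end Matrix

theorem antitone_eigsDesc {l : ℕ} {A : Matrix (Fin l) (Fin l) ℂ} (hA : A.IsHermitian) :
    Antitone (eigsDesc A hA) :=
  fun _ _ h => Tuple.monotone_sort _ (Fin.rev_le_rev.mpr h)

theorem Matrix.PosSemidef.eigsDesc_nonneg {l : ℕ} {A : Matrix (Fin l) (Fin l) ℂ}
    (hA : A.PosSemidef) :
    0 ≤ eigsDesc A hA.isHermitian :=
  fun _ => hA.eigenvalues_nonneg _

theorem trace_mul_ge_eig_mul_eig_general (l : ℕ)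
    (A B : Matrix (Fin l) (Fin l) ℂ)
    (hA : A.PosSemidef) (hB : B.PosSemidef) (i : Fin l) :
    ((A * B).trace).re ≥ eigsDesc A hA.isHermitian i * eigsDesc B hB.isHermitian i.rev := by
  set α := hA.isHermitian.eigenvalues
  set β := hB.isHermitian.eigenvalues
  let eA : Equiv.Perm (Fin l) := Fin.revPerm.trans (Tuple.sort α)
  let eB : Equiv.Perm (Fin l) := Fin.revPerm.trans (Tuple.sort β)
  let D := (star (hA.isHermitian.eigenvectorUnitary : Matrix (Fin l) (Fin l) ℂ) *
    hB.isHermitian.eigenvectorUnitary).map (‖·‖ ^ 2)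
  have hD : D ∈ doublyStochastic ℝ (Fin l) := map_norm_sq_mem_doublyStochastic <|
    mul_mem (Unitary.star_mem hA.isHermitian.eigenvectorUnitary.2)
      hB.isHermitian.eigenvectorUnitary.2
  calc eigsDesc A hA.isHermitian i * eigsDesc B hB.isHermitian i.rev
      ≤ ∑ j, ∑ k, α (eA j) * β (eB k) * D.reindex eA.symm eB.symm j k :=
        mul_le_sum_mul_mul_of_mem_doublyStochastic hA.eigsDesc_nonneg hB.eigsDesc_nonneg
          (antitone_eigsDesc _) (antitone_eigsDesc _) (reindex_mem_doublyStochastic hD) i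
    _ = ∑ j, ∑ k, α j * β k * D j k :=
        Fintype.sum_equiv eA _ _ fun j => Fintype.sum_equiv eB _ _ fun k => rfl
    _ = ((A * B).trace).re := (hA.isHermitian.re_trace_mul_eq_sum hB.isHermitian).symm

/-- For positive semidefinite Hermitian `A, B` and every `r ∈ {1, ..., l}` (here `r = i + 1`
for `i : Fin l`, so that `λ_{l - r + 1}(B)` is `eigsDesc B _ i.rev`):
`tr(AB) ≥ λ_r(A) λ_{l-r+1}(B)`.  For positive semidefinite matrices the eigenvalues in
decreasing order coincide with the singular values. -/
theorem trace_mul_ge_eig_mul_eig (l : ℕ) (hl : 1 ≤ l)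
    (A B : Matrix (Fin l) (Fin l) ℂ)
    (hA : A.PosSemidef) (hB : B.PosSemidef) (i : Fin l) :
    ((A * B).trace).re ≥ eigsDesc A hA.isHermitian i * eigsDesc B hB.isHermitian i.rev :=
  trace_mul_ge_eig_mul_eig_general l A B hA hB i
end
end
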